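/- arXiv:2512.16833 — 5 statements merged into one kernel-verified Lean document; each statement's English description precedes it below -/
import Mathlib

section
/- For every real number w with 0 < w < 1 and every real number t, |t|/(w·exp(t) + (1−w)·exp(−t))² ≤ 1/(4·(min{w, 1−w})²). -/
/-!
The mixture `w eᵗ + (1 − w) e⁻ᵗ` is at least `min{w, 1 − w} (eᵗ + e⁻ᵗ)`, i.e.
`2 min{w, 1 − w} cosh t`, so the quotient is at most `|t| / (4 min{w, 1 − w}² cosh² t)`;
and `|t| ≤ cosh² t`, because `|t| ≤ |sinh t| ≤ 1 + sinh² t = cosh² t`.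
-/

open Real

lemma min_mul_add_le_mul_add_mul {a b x y : ℝ} (hx : 0 ≤ x) (hy : 0 ≤ y) :
    min a b * (x + y) ≤ a * x + b * y := by
  rw [mul_add]
  exact add_le_add (mul_le_mul_of_nonneg_right (min_le_left a b) hx)
    (mul_le_mul_of_nonneg_right (min_le_right a b) hy)

lemma Real.abs_le_cosh_sq (t : ℝ) : |t| ≤ cosh t ^ 2 := by
  have h : |t| ≤ |sinh t| := by
    rw [abs_sinh]
    exact self_le_sinh_iff.2 (abs_nonneg t)
  nlinarith [cosh_sq t, sq_abs (sinh t), sq_nonneg (|sinh t| - 1)]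

/-- Global bound on `f₂(t) = t·(w·eᵗ + (1−w)·e^{−t})^{−2}`:
for `w ∈ (0,1)` and all real `t`, `|f₂(t)| ≤ 1/(4·min{w,1−w}²)`. -/
theorem f2_global_bound (w t : ℝ) (hw0 : 0 < w) (hw1 : w < 1) :
    |t| / (w * Real.exp t + (1 - w) * Real.exp (-t)) ^ 2
      ≤ 1 / (4 * (min w (1 - w)) ^ 2) := by
  set m := min w (1 - w)
  have hm : 0 < m := lt_min hw0 (sub_pos.2 hw1)
  have hmix : 2 * m * cosh t ≤ w * exp t + (1 - w) * exp (-t) := by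
    rw [cosh_eq]
    linarith [min_mul_add_le_mul_add_mul (a := w) (b := 1 - w) (exp_pos t).le (exp_pos (-t)).le]
  have hcosh : 0 < cosh t := cosh_pos t
  calc |t| / (w * exp t + (1 - w) * exp (-t)) ^ 2
      ≤ cosh t ^ 2 / (w * exp t + (1 - w) * exp (-t)) ^ 2 :=
        div_le_div_of_nonneg_right (abs_le_cosh_sq t) (sq_nonneg _)
    _ ≤ cosh t ^ 2 / (2 * m * cosh t) ^ 2 :=
        div_le_div_of_nonneg_left (sq_nonneg _) (by positivity)
          (pow_le_pow_left₀ (by positivity) hmix 2)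
    _ = 1 / (4 * m ^ 2) := by field_simp; ring
end

section
/- For every real number w with 0 < w < 1, every real number a ≥ 0, and every real number t with t ≥ a, t/(w·exp(t) + (1−w)·exp(−t))² ≤ exp(−3a/2)/(min{w, 1−w})². -/
/-!
Bounding the mixture `w eᵗ + (1−w) e^{−t}` below by `min{w, 1−w} eᵗ` leaves `t e^{−2t} / min{w, 1−w}²`,
and `t ≤ e^{t/2}` turns `t e^{−2t}` into `e^{−3t/2}`, which is decreasing in `t`.
-/

open Real

theorem Real.le_exp_half (x : ℝ) : x ≤ exp (x / 2) := by
  have hsq : exp (x / 2) = exp (x / 4) ^ 2 := by rw [← exp_nat_mul]; ring_nf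
  -- `(1 + x/4)² - x = (1 - x/4)² ≥ 0`
  nlinarith [add_one_le_exp (x / 4), exp_pos (x / 4), sq_nonneg (1 - x / 4)]

theorem Real.exp_half_div_mul_exp_sq (m t : ℝ) :
    exp (t / 2) / (m * exp t) ^ 2 = exp (-3 * t / 2) / m ^ 2 := by
  rw [mul_pow, ← div_div, div_right_comm, ← exp_nat_mul, ← exp_sub]
  ring_nf

theorem min_mul_exp_le_mixture {w : ℝ} (hw : w ≤ 1) (t : ℝ) :
    min w (1 - w) * exp t ≤ w * exp t + (1 - w) * exp (-t) := by
  have hleft : min w (1 - w) * exp t ≤ w * exp t := by gcongr; exact min_le_left _ _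
  have hright : 0 ≤ (1 - w) * exp (-t) := mul_nonneg (by linarith) (exp_pos _).le
  linarith

theorem f2_tail_bound_general (w a t : ℝ) (hw0 : 0 < w) (hw1 : w < 1)
    (hta : a ≤ t) :
    t / (w * Real.exp t + (1 - w) * Real.exp (-t)) ^ 2
      ≤ Real.exp (-3 * a / 2) / (min w (1 - w)) ^ 2 := by
  set m := min w (1 - w)
  have hm : 0 < m := lt_min hw0 (by linarith)
  have hden : m * exp t ≤ w * exp t + (1 - w) * exp (-t) := min_mul_exp_le_mixture hw1.le t
  calc t / (w * exp t + (1 - w) * exp (-t)) ^ 2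
      ≤ exp (t / 2) / (w * exp t + (1 - w) * exp (-t)) ^ 2 := by
        gcongr; exact le_exp_half t
    _ ≤ exp (t / 2) / (m * exp t) ^ 2 := by gcongr
    _ = exp (-3 * t / 2) / m ^ 2 := exp_half_div_mul_exp_sq m t
    _ ≤ exp (-3 * a / 2) / m ^ 2 := by gcongr exp ?_ / _; linarith

/-- Tail bound on `f₂(t) = t·(w·eᵗ + (1−w)·e^{−t})^{−2}` over `[a, ∞)`:
for `w ∈ (0,1)`, `a ≥ 0` and `t ≥ a`, `f₂(t) ≤ exp(−3a/2)/(min{w,1−w})²`. -/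
theorem f2_tail_bound (w a t : ℝ) (hw0 : 0 < w) (hw1 : w < 1)
    (ha : 0 ≤ a) (hta : a ≤ t) :
    t / (w * Real.exp t + (1 - w) * Real.exp (-t)) ^ 2
      ≤ Real.exp (-3 * a / 2) / (min w (1 - w)) ^ 2 :=
  f2_tail_bound_general w a t hw0 hw1 hta
end

section
/- For every real number w with 0 < w < 1, every real number b, and every real number t, |t² − b²|/(w·exp(t) + (1−w)·exp(−t))² ≤ (1 + b²)/(min{w, 1−w})². -/
/-!
The mixture `w eᵗ + (1 − w) e⁻ᵗ` dominates `min{w, 1 − w} · e^{|t|}`, while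
`|t² − b²| ≤ (1 + b²)(1 + |t|)² ≤ (1 + b²) e^{2|t|}`; the factors `e^{2|t|}` cancel.
-/

open Real

lemma abs_sq_sub_sq_le_mul_exp_abs_sq (t b : ℝ) :
    |t ^ 2 - b ^ 2| ≤ (1 + b ^ 2) * exp |t| ^ 2 := by
  have hsq : t ^ 2 ≤ (1 + |t|) ^ 2 := by
    rw [← sq_abs t]
    gcongr
    linarith
  calc |t ^ 2 - b ^ 2| ≤ t ^ 2 + b ^ 2 := (abs_sub _ _).trans_eq (by rw [abs_sq, abs_sq])
    _ ≤ (1 + b ^ 2) * (1 + |t|) ^ 2 := by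
        nlinarith [mul_nonneg (sq_nonneg b) (mul_nonneg (abs_nonneg t) (by positivity : 0 ≤ 2 + |t|))]
    _ ≤ (1 + b ^ 2) * exp |t| ^ 2 := by
        gcongr
        linarith [add_one_le_exp |t|]

lemma min_mul_exp_abs_le {a c : ℝ} (ha : 0 ≤ a) (hc : 0 ≤ c) (t : ℝ) :
    min a c * exp |t| ≤ a * exp t + c * exp (-t) := by
  rcases abs_cases t with ⟨ht, _⟩ | ⟨ht, _⟩ <;> rw [ht]
  · nlinarith [min_le_left a c, exp_pos t, exp_pos (-t)]
  · nlinarith [min_le_right a c, exp_pos t, exp_pos (-t)]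

/-- Global bound on `f₃(t) = (t² − b²)·(w·eᵗ + (1−w)·e^{−t})^{−2}`:
for `w ∈ (0,1)`, any real `b` and all real `t`, `|f₃(t)| ≤ (1+b²)/(min{w,1−w})²`. -/
theorem f3_global_bound (w b t : ℝ) (hw0 : 0 < w) (hw1 : w < 1) :
    |t ^ 2 - b ^ 2| / (w * Real.exp t + (1 - w) * Real.exp (-t)) ^ 2
      ≤ (1 + b ^ 2) / (min w (1 - w)) ^ 2 := by
  have hm : 0 < min w (1 - w) := lt_min hw0 (by linarith)
  calc |t ^ 2 - b ^ 2| / (w * exp t + (1 - w) * exp (-t)) ^ 2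
      ≤ (1 + b ^ 2) * exp |t| ^ 2 / (min w (1 - w) * exp |t|) ^ 2 := by
        gcongr
        · exact abs_sq_sub_sq_le_mul_exp_abs_sq t b
        · exact min_mul_exp_abs_le hw0.le (by linarith) t
    _ = (1 + b ^ 2) / min w (1 - w) ^ 2 := by
        rw [mul_pow, mul_div_mul_right _ _ (by positivity)]
end

section
/- Let d ≥ 1, let y, μ₀, μ₁ ∈ ℝᵈ, let Ω be a symmetric linear map on ℝᵈ, and let λ ∈ (0,1). With t = ⟨μ₀ − μ₁, Ω(y − (μ₀+μ₁)/2)⟩ and γ(μ₀,μ₁) = λ/(λ + (1−λ)·exp(t)), the gradient of γ with respect to μ₁ has Euclidean norm at most ‖Ω(y−μ₁)‖/4, and the gradient of γ with respect to μ₀ has Euclidean norm at most ‖Ω(y−μ₀)‖/4. -/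
/-!
Since `Ω` is symmetric, `t a b = Q a - Q b` for the concave quadratic
`Q z = ⟪z, Ω y⟫ - ⟪z, Ω z⟫ / 2`, whose gradient at `x` is `Ω (y - x)`. The responsibility is
`σ ∘ t` with `σ s = λ / (λ + (1 - λ) eˢ)`, and `|σ'(s)| = ab / (a + b)²` with `a = λ`,
`b = (1 - λ) eˢ`, which is at most `1/4` by AM-GM. The chain rule then bounds each gradient by
`‖Ω (y - μₖ)‖ / 4`.
-/

open RealInnerProductSpace

section InnerProductSpace

variable {E : Type*} [NormedAddCommGroup E] [InnerProductSpace ℝ E] {Ω : E →ₗ[ℝ] E}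

theorem LinearMap.IsSymmetric.real_inner_apply_comm (hΩ : Ω.IsSymmetric) (u v : E) :
    ⟪u, Ω v⟫ = ⟪v, Ω u⟫ := by
  rw [← hΩ, real_inner_comm]

theorem LinearMap.IsSymmetric.inner_sub_apply_sub_midpoint (hΩ : Ω.IsSymmetric) (y a b : E) :
    ⟪a - b, Ω (y - (1 / 2 : ℝ) • (a + b))⟫ =
      (⟪a, Ω y⟫ - 2⁻¹ * ⟪a, Ω a⟫) - (⟪b, Ω y⟫ - 2⁻¹ * ⟪b, Ω b⟫) := by
  simp only [map_sub, map_smul, map_add, inner_sub_left, inner_sub_right, inner_add_right,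
    inner_smul_right]
  rw [hΩ.real_inner_apply_comm b a]
  ring

variable [CompleteSpace E]

theorem HasDerivAt.comp_hasGradientAt {g : ℝ → ℝ} {f : E → ℝ} {c : ℝ} {v x : E}
    (hg : HasDerivAt g c (f x)) (hf : HasGradientAt f v x) :
    HasGradientAt (fun z => g (f z)) (c • v) x := by
  rw [hasGradientAt_iff_hasFDerivAt, map_smul]
  exact hg.comp_hasFDerivAt x hf.hasFDerivAt

theorem LinearMap.IsSymmetric.hasGradientAt_inner_sub_half_inner_self (hΩ : Ω.IsSymmetric)
    (y x : E) : HasGradientAt (fun z => ⟪z, Ω y⟫ - 2⁻¹ * ⟪z, Ω z⟫) (Ω (y - x)) x := by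
  have hΩx : HasFDerivAt (fun z => Ω z) (⟨Ω, hΩ.continuous⟩ : E →L[ℝ] E) x :=
    ContinuousLinearMap.hasFDerivAt (⟨Ω, hΩ.continuous⟩ : E →L[ℝ] E)
  have hquad := (hasFDerivAt_id x).inner ℝ
    ((hasFDerivAt_const (Ω y) x).sub (hΩx.const_smul (2⁻¹ : ℝ)))
  rw [hasGradientAt_iff_hasFDerivAt]
  refine (hquad.congr_fderiv ?_).congr_of_eventuallyEq (.of_eq ?_)
  · ext h
    simp only [id_eq, Pi.sub_apply, Pi.smul_apply, zero_sub, ContinuousLinearMap.comp_apply,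
      ContinuousLinearMap.prod_apply, ContinuousLinearMap.id_apply, _root_.neg_apply,
      _root_.smul_apply, ContinuousLinearMap.coe_mk', fderivInnerCLM_apply, inner_neg_right,
      inner_smul_right, ← hΩ _ h, real_inner_comm h, inner_sub_right, map_sub, _root_.sub_apply,
      InnerProductSpace.toDual_apply_apply]
    ring
  · funext z
    simp [inner_sub_right, inner_smul_right]

end InnerProductSpace

theorem abs_neg_mul_div_add_sq_le {a b : ℝ} (hab : 0 ≤ a * b) :
    |-(a * b) / (a + b) ^ 2| ≤ 1 / 4 := by
  rw [neg_div, abs_neg, abs_of_nonneg (by positivity)]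
  rcases eq_or_ne (a + b) 0 with hsum | hsum
  · simp [hsum]
  · rw [div_le_iff₀ (by positivity)]
    linarith [four_mul_le_sq_add a b]

theorem hasDerivAt_div_add_mul_exp {l : ℝ} (hl0 : 0 < l) (hl1 : l < 1) (s : ℝ) :
    HasDerivAt (fun s => l / (l + (1 - l) * Real.exp s))
      (-(l * ((1 - l) * Real.exp s)) / (l + (1 - l) * Real.exp s) ^ 2) s := by
  have hden : l + (1 - l) * Real.exp s ≠ 0 := by
    have := Real.exp_pos s
    nlinarith
  exact ((hasDerivAt_const s l).div
    (((Real.hasDerivAt_exp s).const_mul (1 - l)).const_add l) hden).congr_deriv (by ring)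

theorem responsibility_gradient_norm_bounds_general (d : ℕ)
    (y μ₀ μ₁ : EuclideanSpace ℝ (Fin d))
    (Ω : EuclideanSpace ℝ (Fin d) →ₗ[ℝ] EuclideanSpace ℝ (Fin d))
    (hΩ : Ω.IsSymmetric) (l : ℝ) (hl0 : 0 < l) (hl1 : l < 1)
    (t : EuclideanSpace ℝ (Fin d) → EuclideanSpace ℝ (Fin d) → ℝ)
    (ht : ∀ a b, t a b = ⟪a - b, Ω (y - (1 / 2 : ℝ) • (a + b))⟫)
    (γ : EuclideanSpace ℝ (Fin d) → EuclideanSpace ℝ (Fin d) → ℝ)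
    (hγ : ∀ a b, γ a b = l / (l + (1 - l) * Real.exp (t a b))) :
    ‖gradient (fun b => γ μ₀ b) μ₁‖ ≤ ‖Ω (y - μ₁)‖ / 4 ∧
    ‖gradient (fun a => γ a μ₁) μ₀‖ ≤ ‖Ω (y - μ₀)‖ / 4 := by
  set σ : ℝ → ℝ := fun s => l / (l + (1 - l) * Real.exp s)
  set Q : EuclideanSpace ℝ (Fin d) → ℝ := fun z => ⟪z, Ω y⟫ - 2⁻¹ * ⟪z, Ω z⟫
  have hγQ : ∀ a b, γ a b = σ (Q a - Q b) := fun a b => by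
    rw [hγ, ht, hΩ.inner_sub_apply_sub_midpoint]
  have hσ := hasDerivAt_div_add_mul_exp hl0 hl1 (Q μ₀ - Q μ₁)
  set c := -(l * ((1 - l) * Real.exp (Q μ₀ - Q μ₁))) /
    (l + (1 - l) * Real.exp (Q μ₀ - Q μ₁)) ^ 2
  have hc : |c| ≤ 1 / 4 := abs_neg_mul_div_add_sq_le <|
    mul_nonneg hl0.le (mul_nonneg (sub_nonneg.2 hl1.le) (Real.exp_pos _).le)
  have hσ₁ : HasDerivAt (fun r => σ (Q μ₀ - r)) (c * -1) (Q μ₁) :=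
    HasDerivAt.comp (h₂ := σ) (Q μ₁) hσ ((hasDerivAt_id _).const_sub _)
  have hσ₀ : HasDerivAt (fun r => σ (r - Q μ₁)) (c * 1) (Q μ₀) :=
    HasDerivAt.comp (h₂ := σ) (Q μ₀) hσ (HasDerivAt.sub_const (Q μ₁) (hasDerivAt_id (Q μ₀)))
  simp only [hγQ]
  rw [(hσ₁.comp_hasGradientAt (hΩ.hasGradientAt_inner_sub_half_inner_self y μ₁)).gradient,
    (hσ₀.comp_hasGradientAt (hΩ.hasGradientAt_inner_sub_half_inner_self y μ₀)).gradient,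
    norm_smul, norm_smul, mul_neg_one, mul_one, norm_neg, Real.norm_eq_abs]
  have hquarter : ∀ v : EuclideanSpace ℝ (Fin d), |c| * ‖v‖ ≤ ‖v‖ / 4 := fun v => by
    nlinarith [norm_nonneg v]
  exact ⟨hquarter _, hquarter _⟩

/-- Norm bounds on the gradients of the two-component Gaussian-mixture responsibility
`γ(μ₀,μ₁) = λ/(λ + (1−λ)·exp(⟪μ₀−μ₁, Ω(y−(μ₀+μ₁)/2)⟫))` with respect to the component
means: `‖∇_{μ₁} γ‖ ≤ ‖Ω(y−μ₁)‖/4` and `‖∇_{μ₀} γ‖ ≤ ‖Ω(y−μ₀)‖/4`. -/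
theorem responsibility_gradient_norm_bounds (d : ℕ) (hd : 1 ≤ d)
    (y μ₀ μ₁ : EuclideanSpace ℝ (Fin d))
    (Ω : EuclideanSpace ℝ (Fin d) →ₗ[ℝ] EuclideanSpace ℝ (Fin d))
    (hΩ : Ω.IsSymmetric) (l : ℝ) (hl0 : 0 < l) (hl1 : l < 1)
    (t : EuclideanSpace ℝ (Fin d) → EuclideanSpace ℝ (Fin d) → ℝ)
    (ht : ∀ a b, t a b = ⟪a - b, Ω (y - (1 / 2 : ℝ) • (a + b))⟫)
    (γ : EuclideanSpace ℝ (Fin d) → EuclideanSpace ℝ (Fin d) → ℝ)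
    (hγ : ∀ a b, γ a b = l / (l + (1 - l) * Real.exp (t a b))) :
    ‖gradient (fun b => γ μ₀ b) μ₁‖ ≤ ‖Ω (y - μ₁)‖ / 4 ∧
    ‖gradient (fun a => γ a μ₁) μ₀‖ ≤ ‖Ω (y - μ₀)‖ / 4 :=
  responsibility_gradient_norm_bounds_general d y μ₀ μ₁ Ω hΩ l hl0 hl1 t ht γ hγ
end

section
/- Let c₀ and c₁ be constants with 0 < c₀ < 1/2 and 1/2 < c₁ < 1, let Δ > 0, let w ∈ (c₀, 1−c₀), let δ be a real number with (1−c₁)·Δ² < |δ| < (1+c₁)·Δ², and let σ > 0 satisfy (1−c₁)·Δ² < σ² < (1+c₁)·Δ². Set c₄ = min{(1−c₁)/2, (1−c₁)²/(8·(1+c₁))}. Then ∫ℝ (w·exp(δ + σ·z) + (1−w)·exp(−(δ + σ·z)))^{−2} dγ(z) ≤ (2/c₀²)·exp(−c₄·Δ²), where γ is the standard Gaussian measure N(0,1) on ℝ. -/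
open MeasureTheory ProbabilityTheory Real
open scoped NNReal

/-! Both mixture weights are at least `c₀`, so the denominator is at least `c₀ e^{|u|}` and the
integrand at most `c₀⁻² e^{-l|u|}` for every `l ∈ [0, 2]`. Using `|δ + σz| ≥ |δ| - σ|z|`,
`e^{|x|} ≤ e^x + e^{-x}` and the Gaussian moment generating function, the expectation is at most
`(2/c₀²) exp(-l|δ| + l²σ²/2)`. The choice `l = min(2, |δ|/σ²)` makes this exponent at most
`-min(|δ|, δ²/(2σ²))`, and on the contraction region that is at most `-c₄ Δ²`. -/

lemma integrable_exp_mul_add_exp_neg_mul_gaussianReal (μ : ℝ) (v : ℝ≥0) (t : ℝ) :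
    Integrable (fun z ↦ exp (t * z) + exp (-(t * z))) (gaussianReal μ v) := by
  simp_rw [← neg_mul]
  exact (integrable_exp_mul_gaussianReal t).add (integrable_exp_mul_gaussianReal (-t))

lemma integral_exp_mul_add_exp_neg_mul_gaussianReal (v : ℝ≥0) (t : ℝ) :
    ∫ z, (exp (t * z) + exp (-(t * z))) ∂gaussianReal 0 v = 2 * exp (v * t ^ 2 / 2) := by
  simp_rw [← neg_mul]
  rw [integral_add (integrable_exp_mul_gaussianReal t) (integrable_exp_mul_gaussianReal (-t))]
  have hmgf := congrFun (mgf_fun_id_gaussianReal (μ := 0) (v := v))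
  simp only [mgf] at hmgf
  simp only [hmgf, zero_mul, zero_add, neg_sq, two_mul]

lemma mul_exp_abs_le_mixture {c w : ℝ} (hc : 0 ≤ c) (hcw : c ≤ w) (hwc : w ≤ 1 - c) (u : ℝ) :
    c * exp |u| ≤ w * exp u + (1 - w) * exp (-u) := by
  have hpos := exp_pos u
  have hpos' := exp_pos (-u)
  rcases abs_cases u with ⟨hu, -⟩ | ⟨hu, -⟩ <;> rw [hu] <;> nlinarith

lemma inv_sq_mixture_le {c w l : ℝ} (hc : 0 < c) (hcw : c ≤ w) (hwc : w ≤ 1 - c)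
    (hl : l ≤ 2) (u : ℝ) :
    ((w * exp u + (1 - w) * exp (-u)) ^ 2)⁻¹ ≤ (c ^ 2)⁻¹ * exp (-(l * |u|)) := calc
  ((w * exp u + (1 - w) * exp (-u)) ^ 2)⁻¹ ≤ ((c * exp |u|) ^ 2)⁻¹ := by
    gcongr
    exact mul_exp_abs_le_mixture hc.le hcw hwc u
  _ = (c ^ 2)⁻¹ * exp (-(2 * |u|)) := by
    rw [mul_pow, ← exp_nat_mul, mul_inv, ← exp_neg]
    norm_num
  _ ≤ (c ^ 2)⁻¹ * exp (-(l * |u|)) := by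
    gcongr

lemma integral_inv_sq_mixture_gaussianReal_le {c w l : ℝ} (hc : 0 < c) (hcw : c ≤ w)
    (hwc : w ≤ 1 - c) (hl₀ : 0 ≤ l) (hl₂ : l ≤ 2) (δ σ : ℝ) :
    ∫ z, ((w * exp (δ + σ * z) + (1 - w) * exp (-(δ + σ * z))) ^ 2)⁻¹ ∂gaussianReal 0 1
      ≤ 2 / c ^ 2 * exp (-(l * |δ|) + (l * σ) ^ 2 / 2) := by
  have hpointwise (z : ℝ) :
      ((w * exp (δ + σ * z) + (1 - w) * exp (-(δ + σ * z))) ^ 2)⁻¹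
        ≤ (c ^ 2)⁻¹ * exp (-(l * |δ|)) * (exp (l * σ * z) + exp (-(l * σ * z))) := calc
    _ ≤ (c ^ 2)⁻¹ * exp (-(l * |δ + σ * z|)) := inv_sq_mixture_le hc hcw hwc hl₂ _
    _ ≤ (c ^ 2)⁻¹ * (exp (-(l * |δ|)) * exp |l * σ * z|) := by
      rw [← exp_add]
      gcongr
      have := abs_sub_abs_le_abs_sub δ (-(σ * z))
      rw [sub_neg_eq_add, abs_neg] at this
      rw [abs_mul, abs_mul, abs_of_nonneg hl₀]
      nlinarith [abs_mul σ z]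
    _ ≤ _ := by
      rw [← mul_assoc]
      gcongr
      exact exp_abs_le _
  calc _ ≤ ∫ z, (c ^ 2)⁻¹ * exp (-(l * |δ|)) * (exp (l * σ * z) + exp (-(l * σ * z)))
          ∂gaussianReal 0 1 :=
        integral_mono_of_nonneg (.of_forall fun z ↦ by positivity)
          ((integrable_exp_mul_add_exp_neg_mul_gaussianReal 0 1 _).const_mul _)
          (.of_forall hpointwise)
    _ = 2 / c ^ 2 * exp (-(l * |δ|) + (l * σ) ^ 2 / 2) := by
      rw [integral_const_mul, integral_exp_mul_add_exp_neg_mul_gaussianReal, NNReal.coe_one,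
        one_mul, exp_add]
      ring

lemma exists_exponent_le_neg_min (δ : ℝ) {σ : ℝ} (hσ : σ ≠ 0) :
    ∃ l, 0 ≤ l ∧ l ≤ 2 ∧ -(l * |δ|) + (l * σ) ^ 2 / 2 ≤ -min |δ| (δ ^ 2 / (2 * σ ^ 2)) := by
  have hσ2 : 0 < σ ^ 2 := by positivity
  rcases le_or_gt (2 * σ ^ 2) |δ| with hδ | hδ
  · refine ⟨2, zero_le_two, le_rfl, ?_⟩
    have := min_le_left |δ| (δ ^ 2 / (2 * σ ^ 2))
    nlinarith
  · refine ⟨|δ| / σ ^ 2, by positivity, (div_le_iff₀ hσ2).2 hδ.le, ?_⟩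
    have := min_le_right |δ| (δ ^ 2 / (2 * σ ^ 2))
    have hexp : -(|δ| / σ ^ 2 * |δ|) + (|δ| / σ ^ 2 * σ) ^ 2 / 2 = -(δ ^ 2 / (2 * σ ^ 2)) := by
      field_simp
      rw [sq_abs]
      ring
    linarith

lemma min_mul_sq_le_min_of_contraction {c₁ Δ δ σ : ℝ} (hc₁ : c₁ < 1) (hσ : σ ≠ 0)
    (hδ : (1 - c₁) * Δ ^ 2 < |δ|) (hσ2 : σ ^ 2 < (1 + c₁) * Δ ^ 2) :
    min ((1 - c₁) / 2) ((1 - c₁) ^ 2 / (8 * (1 + c₁))) * Δ ^ 2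
      ≤ min |δ| (δ ^ 2 / (2 * σ ^ 2)) := by
  have hσ2pos : 0 < σ ^ 2 := by positivity
  have hΔ2 : 0 ≤ Δ ^ 2 := sq_nonneg Δ
  have hc₁pos : 0 < 1 + c₁ := by nlinarith
  refine le_min ?_ ?_
  · calc _ ≤ (1 - c₁) / 2 * Δ ^ 2 := by gcongr; exact min_le_left _ _
      _ ≤ |δ| := by nlinarith
  · calc _ ≤ (1 - c₁) ^ 2 / (8 * (1 + c₁)) * Δ ^ 2 := by gcongr; exact min_le_right _ _
      _ ≤ δ ^ 2 / (2 * σ ^ 2) := by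
        rw [le_div_iff₀ (by positivity)]
        have hδ2 : ((1 - c₁) * Δ ^ 2) ^ 2 ≤ δ ^ 2 := by
          rw [← sq_abs δ]
          exact pow_le_pow_left₀ (by nlinarith) hδ.le 2
        calc (1 - c₁) ^ 2 / (8 * (1 + c₁)) * Δ ^ 2 * (2 * σ ^ 2)
            ≤ (1 - c₁) ^ 2 / (8 * (1 + c₁)) * Δ ^ 2 * (2 * ((1 + c₁) * Δ ^ 2)) := by
              gcongr
          _ = ((1 - c₁) * Δ ^ 2) ^ 2 / 4 := by field_simp; ring
          _ ≤ δ ^ 2 := by nlinarith [sq_nonneg ((1 - c₁) * Δ ^ 2)]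

theorem gaussian_responsibility_derivative_bound_general
    (c₀ c₁ Δ w δ σ c₄ : ℝ)
    (hc₀ : 0 < c₀) (hc₁' : c₁ < 1)
    (hw : c₀ < w) (hw' : w < 1 - c₀)
    (hδ : (1 - c₁) * Δ ^ 2 < |δ|)
    (hσ : 0 < σ) (hσ2' : σ ^ 2 < (1 + c₁) * Δ ^ 2)
    (hc₄ : c₄ = min ((1 - c₁) / 2) ((1 - c₁) ^ 2 / (8 * (1 + c₁)))) :
    ∫ z, ((w * Real.exp (δ + σ * z) + (1 - w) * Real.exp (-(δ + σ * z))) ^ 2)⁻¹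
        ∂(gaussianReal 0 1)
      ≤ (2 / c₀ ^ 2) * Real.exp (-c₄ * Δ ^ 2) := by
  obtain ⟨l, hl₀, hl₂, hexponent⟩ := exists_exponent_le_neg_min δ hσ.ne'
  calc _ ≤ 2 / c₀ ^ 2 * exp (-(l * |δ|) + (l * σ) ^ 2 / 2) :=
        integral_inv_sq_mixture_gaussianReal_le hc₀ hw.le hw'.le hl₀ hl₂ δ σ
    _ ≤ 2 / c₀ ^ 2 * exp (-c₄ * Δ ^ 2) := by
      gcongr
      rw [hc₄, neg_mul]
      exact hexponent.trans (neg_le_neg (min_mul_sq_le_min_of_contraction hc₁' hσ.ne' hδ hσ2'))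

/-- Key Gaussian expectation bound in the contraction of the population EM update of
the mixing proportion: for `w ∈ (c₀, 1−c₀)` and `δ, σ²` in the contraction region,
`E[(w·e^{δ+σZ} + (1−w)·e^{−(δ+σZ)})^{−2}] ≤ (2/c₀²)·exp(−c₄·Δ²)` for `Z ∼ N(0,1)`. -/
theorem gaussian_responsibility_derivative_bound
    (c₀ c₁ Δ w δ σ c₄ : ℝ)
    (hc₀ : 0 < c₀) (hc₀' : c₀ < 1 / 2) (hc₁ : 1 / 2 < c₁) (hc₁' : c₁ < 1)
    (hΔ : 0 < Δ) (hw : c₀ < w) (hw' : w < 1 - c₀)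
    (hδ : (1 - c₁) * Δ ^ 2 < |δ|) (hδ' : |δ| < (1 + c₁) * Δ ^ 2)
    (hσ : 0 < σ) (hσ2 : (1 - c₁) * Δ ^ 2 < σ ^ 2) (hσ2' : σ ^ 2 < (1 + c₁) * Δ ^ 2)
    (hc₄ : c₄ = min ((1 - c₁) / 2) ((1 - c₁) ^ 2 / (8 * (1 + c₁)))) :
    ∫ z, ((w * Real.exp (δ + σ * z) + (1 - w) * Real.exp (-(δ + σ * z))) ^ 2)⁻¹
        ∂(gaussianReal 0 1)
      ≤ (2 / c₀ ^ 2) * Real.exp (-c₄ * Δ ^ 2) :=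
  gaussian_responsibility_derivative_bound_general c₀ c₁ Δ w δ σ c₄ hc₀ hc₁' hw hw' hδ hσ hσ2' hc₄
end
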